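/- Let (R, ≤, r) be metrically closed and satisfy axioms A.1–A.6. Then every metrically open subset X of R is Ramsey: for every nonempty Ellentuck neighborhood [a, A] there exists B ∈ [a, A] such that [a, B] ⊆ X or [a, B] ∩ X = ∅. -/

import Mathlib

/-- A triple `(R, ≤, r)`: a set `R`, a quasi-order `≤` on it, and an approximation
function `r : ℕ × R → AR` with range `AR`, together with a finitization quasi-order
`≤_fin` on `AR`. -/
structure RSpace where
  R : Type
  AR : Type
  le : R → R → Prop
  le_refl : ∀ A, le A A
  le_trans : ∀ A B C, le A B → le B C → le A C
  r : ℕ → R → AR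
  lefin : AR → AR → Prop
  lefin_refl : ∀ a, lefin a a
  lefin_trans : ∀ a b c, lefin a b → lefin b c → lefin a c
  r_surj : ∀ a : AR, ∃ n A, r n A = a

namespace RSpace

variable (S : RSpace)

/-- The Ellentuck neighborhood `[a, A] = {B ≤ A : ∃ n, r_n(B) = a}`. -/
def nbhd (a : S.AR) (A : S.R) : Set S.R := {B | S.le B A ∧ ∃ n, S.r n B = a}

/-- `AR(A) = {a ∈ AR : [a, A] ≠ ∅}`. -/
def ARof (A : S.R) : Set S.AR := {a | (S.nbhd a A).Nonempty}

/-- `depth_A(a) = n`: `n` is least with `a ≤_fin r_n(A)`. -/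
def IsDepth (A : S.R) (a : S.AR) (n : ℕ) : Prop :=
  S.lefin a (S.r n A) ∧ ∀ i < n, ¬ S.lefin a (S.r i A)

/-- (A.1) `r_0(A) = ∅` for all `A`. -/
def A1 : Prop := ∀ A B, S.r 0 A = S.r 0 B

/-- (A.2) distinct elements have some distinct approximation. -/
def A2 : Prop := ∀ A B, A ≠ B → ∃ n, S.r n A ≠ S.r n B

/-- (A.3) `r_n(A) = r_m(B)` implies `n = m` and `r_i(A) = r_i(B)` for all `i < n`. -/
def A3 : Prop := ∀ A B n m, S.r n A = S.r m B → n = m ∧ ∀ i < n, S.r i A = S.r i B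

/-- (A.4)(i) finitization: `A ≤ B` iff every approximation of `A` is `≤_fin` some
approximation of `B`. -/
def A4i : Prop := ∀ A B, S.le A B ↔ ∀ n, ∃ m, S.lefin (S.r n A) (S.r m B)

/-- (A.4)(ii) each `≤_fin`-downward cone is finite. -/
def A4ii : Prop := ∀ a : S.AR, {b | S.lefin b a}.Finite

/-- (A.5) amalgamation. -/
def A5 : Prop := ∀ (a : S.AR) (A : S.R) (n : ℕ), S.IsDepth A a n →
  (∀ B ∈ S.nbhd (S.r n A) A, (S.nbhd a B).Nonempty) ∧
  (∀ B ∈ S.nbhd a A, ∃ A' ∈ S.nbhd (S.r n A) A, S.nbhd a A' ⊆ S.nbhd a B)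

/-- (A.6) abstract pigeonhole: if `depth_A(a) = n` and `|a| = l`, then for every
`O ⊆ AR` there is `B ∈ [n, A]` with `r_{l+1}[a, B] ⊆ O` or `r_{l+1}[a, B] ⊆ Oᶜ`. -/
def A6 : Prop := ∀ (a : S.AR) (A : S.R) (n l : ℕ), S.IsDepth A a n →
  (∃ C, S.r l C = a) →
  ∀ O : Set S.AR, ∃ B ∈ S.nbhd (S.r n A) A,
    (∀ b : S.AR, (∃ C ∈ S.nbhd a B, S.r (l + 1) C = b) → b ∈ O) ∨
    (∀ b : S.AR, (∃ C ∈ S.nbhd a B, S.r (l + 1) C = b) → b ∉ O)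

/-- `R` is metrically closed as a subspace of `AR^ℕ` (identifying each `A ∈ R` with its
sequence of approximations): every sequence of approximations all of whose initial
segments come from elements of `R` is itself the approximation sequence of an element. -/
def MetricallyClosed : Prop :=
  ∀ f : ℕ → S.AR, (∀ n, ∃ A, ∀ i ≤ n, S.r i A = f i) → ∃ A, ∀ n, S.r n A = f n

/-- `(R, ≤, r)` is metrically closed and satisfies axioms (A.1)–(A.6). -/
def Axioms : Prop :=
  S.A1 ∧ S.A2 ∧ S.A3 ∧ S.A4i ∧ S.A4ii ∧ S.A5 ∧ S.A6 ∧ S.MetricallyClosed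

end RSpace

/-- `X` is open in the metric topology on `R` (basic open sets `[a] = {B : ∃ n, r_n(B) = a}`). -/
def RSpace.MetricOpen (S : RSpace) (X : Set S.R) : Prop :=
  ∀ A ∈ X, ∃ n, ∀ B : S.R, S.r n B = S.r n A → B ∈ X


/-! Combinatorial forcing. Call `B` accepting for `b` if `[b, B] ⊆ X`, and rejecting if no
`C ≤ B` with `[b, C] ≠ ∅` is accepting. By (A.5) every `B` can be shrunk inside
`[depth_B(b), B]` to a `B'` that accepts or rejects `b`, and a fusion over all depths
(finitely many `b` per depth by (A.4), limits by metric closedness) yields `D ≤ A` deciding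
every extension of `a`. If `D` accepts `a` we are done. Otherwise the pigeonhole (A.6)
lets a second fusion shrink `D` to `E` such that `D` rejects every approximation beyond `a`
of every `C ∈ [a, E]`; an open set containing `C` would be accepted by `D` at some such
approximation, so `[a, E]` misses `X`. -/

namespace RSpace

variable {S : RSpace}

theorem r_agree_of_r_eq (h3 : S.A3) {B C : S.R} {m k : ℕ} (h : S.r m C = S.r k B) :
    m = k ∧ ∀ i ≤ k, S.r i C = S.r i B := by
  obtain ⟨rfl, hlt⟩ := h3 C B m k h
  exact ⟨rfl, fun i hi => hi.lt_or_eq.elim (hlt i) (· ▸ h)⟩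

theorem mem_nbhd_self (B : S.R) (k : ℕ) : B ∈ S.nbhd (S.r k B) B :=
  ⟨S.le_refl B, k, rfl⟩

theorem nbhd_mono {b : S.AR} {B B' : S.R} (h : S.le B' B) : S.nbhd b B' ⊆ S.nbhd b B :=
  fun _ hC => ⟨S.le_trans _ _ _ hC.1 h, hC.2⟩

theorem r_eq_of_mem_nbhd_r (h3 : S.A3) {B C : S.R} {k : ℕ} (h : C ∈ S.nbhd (S.r k B) B) :
    ∀ i ≤ k, S.r i C = S.r i B :=
  (r_agree_of_r_eq h3 h.2.choose_spec).2

theorem mem_nbhd_r_trans (h3 : S.A3) {B B' B'' : S.R} {k : ℕ}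
    (h : B' ∈ S.nbhd (S.r k B) B) (h' : B'' ∈ S.nbhd (S.r k B') B') :
    B'' ∈ S.nbhd (S.r k B) B :=
  ⟨S.le_trans _ _ _ h'.1 h.1, h'.2.imp fun _ hm => hm.trans (r_eq_of_mem_nbhd_r h3 h k le_rfl)⟩

theorem IsDepth.congr {B B' : S.R} {b : S.AR} {k : ℕ} (h : ∀ i ≤ k, S.r i B' = S.r i B)
    (hd : S.IsDepth B b k) : S.IsDepth B' b k :=
  ⟨h k le_rfl ▸ hd.1, fun i hi => h i hi.le ▸ hd.2 i hi⟩

theorem exists_isDepth (h4i : S.A4i) {B : S.R} {b : S.AR} (hb : (S.nbhd b B).Nonempty) :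
    ∃ k, S.IsDepth B b k := by
  classical
  obtain ⟨C, hCB, m, rfl⟩ := hb
  have hex : ∃ q, S.lefin (S.r m C) (S.r q B) := (h4i C B).mp hCB m
  exact ⟨Nat.find hex, Nat.find_spec hex, fun i hi => Nat.find_min hex hi⟩

variable (S) in
def Extends (a b : S.AR) : Prop :=
  ∃ C l m, l ≤ m ∧ S.r l C = a ∧ S.r m C = b

theorem Extends.exists_r_eq (h3 : S.A3) {a b : S.AR} (hab : S.Extends a b) {C : S.R} {p : ℕ}
    (hC : S.r p C = b) : ∃ l ≤ p, S.r l C = a := by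
  obtain ⟨C₀, l, m, hlm, hl, hm⟩ := hab
  obtain ⟨rfl, hagree⟩ := r_agree_of_r_eq h3 (hC.trans hm.symm)
  exact ⟨l, hlm, (hagree l hlm).trans hl⟩

theorem Extends.nbhd_nonempty (h3 : S.A3) {a b : S.AR} (hab : S.Extends a b) {B : S.R}
    (hb : (S.nbhd b B).Nonempty) : (S.nbhd a B).Nonempty := by
  obtain ⟨C, hCB, p, hp⟩ := hb
  obtain ⟨l, -, hl⟩ := hab.exists_r_eq h3 hp
  exact ⟨C, hCB, l, hl⟩

theorem exists_limit_of_fusion (h3 : S.A3) (h4i : S.A4i) (mc : S.MetricallyClosed)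
    (seq : ℕ → S.R) (hseq : ∀ k, seq (k + 1) ∈ S.nbhd (S.r k (seq k)) (seq k)) :
    ∃ E, ∀ k, S.le E (seq k) ∧ ∀ i ≤ k, S.r i E = S.r i (seq k) := by
  have seq_le : ∀ k j, k ≤ j → S.le (seq j) (seq k) := by
    intro k j hkj
    induction j, hkj using Nat.le_induction with
    | base => exact S.le_refl _
    | succ j _ ih => exact S.le_trans _ _ _ (hseq j).1 ih
  have seq_r : ∀ i k j, i ≤ k → k ≤ j → S.r i (seq j) = S.r i (seq k) := by
    intro i k j hik hkj
    induction j, hkj using Nat.le_induction with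
    | base => rfl
    | succ j hj ih => exact (r_eq_of_mem_nbhd_r h3 (hseq j) i (hik.trans hj)).trans ih
  obtain ⟨E, hE⟩ :=
    mc (fun n => S.r n (seq n)) fun n => ⟨seq n, fun i hi => seq_r i i n le_rfl hi⟩
  have hEr : ∀ i k, i ≤ k → S.r i E = S.r i (seq k) := fun i k hik =>
    (hE i).trans (seq_r i i k le_rfl hik).symm
  refine ⟨E, fun k => ⟨(h4i E (seq k)).mpr fun n => ?_, fun i hi => hEr i k hi⟩⟩
  obtain ⟨m, hm⟩ := (h4i _ _).mp (seq_le k _ (le_max_right n k)) n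
  exact ⟨m, hEr n _ (le_max_left n k) ▸ hm⟩

section Fusion

variable {a : S.AR} {T : S.R} (H : S.AR → S.R → Prop)
  (hH : ∀ b B B', S.le B' B → H b B → H b B')
  (step : ∀ B, S.le B T → ∀ b k, S.Extends a b → S.IsDepth B b k →
    ∃ B' ∈ S.nbhd (S.r k B) B, H b B')
include hH step

/-- The middle conjunct (`B` only changes when some extension of `a` has depth `k` in it) is
what keeps `[a, ·]` nonempty in the limit of the fusion. -/
theorem exists_fusion_round (h3 : S.A3) (h4ii : S.A4ii) (k : ℕ) {B : S.R} (hB : S.le B T) :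
    ∃ B' ∈ S.nbhd (S.r k B) B, (B' = B ∨ ∃ b, S.Extends a b ∧ S.IsDepth B b k) ∧
      ∀ b, S.Extends a b → S.IsDepth B b k → H b B' := by
  classical
  suffices ∀ s : Finset S.AR, ∃ B' ∈ S.nbhd (S.r k B) B,
      (B' = B ∨ ∃ b, S.Extends a b ∧ S.IsDepth B b k) ∧
      ∀ b ∈ s, S.Extends a b → S.IsDepth B b k → H b B' by
    obtain ⟨B', hB', hmoved, hall⟩ := this (h4ii (S.r k B)).toFinset
    exact ⟨B', hB', hmoved, fun b hab hd => hall b (by simpa using hd.1) hab hd⟩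
  intro s
  induction s using Finset.induction_on with
  | empty => exact ⟨B, mem_nbhd_self B k, Or.inl rfl, by simp⟩
  | insert b s _ ih =>
    obtain ⟨B₁, hB₁, hmoved, hall⟩ := ih
    by_cases hb : S.Extends a b ∧ S.IsDepth B b k
    · have hd₁ : S.IsDepth B₁ b k := hb.2.congr (r_eq_of_mem_nbhd_r h3 hB₁)
      obtain ⟨B₂, hB₂, hHb⟩ := step B₁ (S.le_trans _ _ _ hB₁.1 hB) b k hb.1 hd₁
      refine ⟨B₂, mem_nbhd_r_trans h3 hB₁ hB₂, Or.inr ⟨b, hb⟩, fun c hc hac hdc => ?_⟩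
      rcases Finset.mem_insert.mp hc with rfl | hc
      · exact hHb
      · exact hH c B₁ B₂ hB₂.1 (hall c hc hac hdc)
    · refine ⟨B₁, hB₁, hmoved, fun c hc hac hdc => ?_⟩
      rcases Finset.mem_insert.mp hc with rfl | hc
      · exact absurd ⟨hac, hdc⟩ hb
      · exact hall c hc hac hdc

theorem exists_fusion (h2 : S.A2) (h3 : S.A3) (h4i : S.A4i) (h4ii : S.A4ii) (h5 : S.A5)
    (mc : S.MetricallyClosed) (ha : (S.nbhd a T).Nonempty) :
    ∃ E, S.le E T ∧ (S.nbhd a E).Nonempty ∧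
      ∀ b, S.Extends a b → (S.nbhd b E).Nonempty → H b E := by
  have round : ∀ k B, ∃ B' ∈ S.nbhd (S.r k B) B,
      (B' = B ∨ ∃ b, S.Extends a b ∧ S.IsDepth B b k) ∧
      (S.le B T → ∀ b, S.Extends a b → S.IsDepth B b k → H b B') := by
    intro k B
    by_cases hB : S.le B T
    · obtain ⟨B', hB', hmoved, hall⟩ := exists_fusion_round H hH step h3 h4ii k hB
      exact ⟨B', hB', hmoved, fun _ => hall⟩
    · exact ⟨B, mem_nbhd_self B k, Or.inl rfl, fun h => absurd h hB⟩
  choose f hf_mem hf_moved hf_H using round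
  let seq : ℕ → S.R := fun n => Nat.rec T (fun k B => f k B) n
  have seq_le : ∀ k, S.le (seq k) T := by
    intro k
    induction k with
    | zero => exact S.le_refl T
    | succ k ih => exact S.le_trans _ _ _ (hf_mem k (seq k)).1 ih
  obtain ⟨E, hE⟩ := exists_limit_of_fusion h3 h4i mc seq fun k => hf_mem k (seq k)
  refine ⟨E, (hE 0).1, ?_, fun b hab hb => ?_⟩
  · by_cases hmoved : ∃ k b, S.Extends a b ∧ S.IsDepth (seq k) b k
    · obtain ⟨k, b, hab, hd⟩ := hmoved
      have hdE : S.IsDepth E b k := hd.congr (hE k).2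
      exact hab.nbhd_nonempty h3 ((h5 b E k hdE).1 E (mem_nbhd_self E k))
    · have seq_eq : ∀ k, seq k = T := by
        intro k
        induction k with
        | zero => rfl
        | succ k ih =>
          exact ((hf_moved k (seq k)).resolve_right fun h => hmoved ⟨k, h⟩).trans ih
      have hET : E = T := by
        by_contra hne
        obtain ⟨n, hn⟩ := h2 E T hne
        exact hn ((hE n).2 n le_rfl ▸ seq_eq n ▸ rfl)
      exact hET ▸ ha
  · obtain ⟨k, hd⟩ := exists_isDepth h4i hb
    exact hH b _ _ (hE (k + 1)).1
      (hf_H k (seq k) (seq_le k) b hab (hd.congr fun i hi => ((hE k).2 i hi).symm))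

end Fusion

variable (S) in
/-- Under (A.5) equivalent to the usual "no `C ∈ [depth_B(b), B]` accepts `b`", where `C`
accepts `b` if `[b, C] ⊆ X`; this form is hereditary for free. -/
def Rejects (X : Set S.R) (B : S.R) (b : S.AR) : Prop :=
  ∀ C, S.le C B → S.nbhd b C ⊆ X → S.nbhd b C = ∅

theorem Rejects.mono {X : Set S.R} {b : S.AR} {B B' : S.R} (h : S.le B' B)
    (hR : S.Rejects X B b) : S.Rejects X B' b :=
  fun C hC => hR C (S.le_trans _ _ _ hC h)

theorem exists_decides (h5 : S.A5) (X : Set S.R) {B : S.R} {b : S.AR} {k : ℕ}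
    (hd : S.IsDepth B b k) :
    ∃ B' ∈ S.nbhd (S.r k B) B, S.nbhd b B' ⊆ X ∨ S.Rejects X B' b := by
  by_cases hacc : ∃ B' ∈ S.nbhd (S.r k B) B, S.nbhd b B' ⊆ X
  · obtain ⟨B', hB', h⟩ := hacc
    exact ⟨B', hB', Or.inl h⟩
  · refine ⟨B, mem_nbhd_self B k, Or.inr fun C hCB hCX => ?_⟩
    refine Set.eq_empty_of_forall_notMem fun w hw => hacc ?_
    obtain ⟨A', hA', hsub⟩ := (h5 b B k hd).2 w ⟨S.le_trans _ _ _ hw.1 hCB, hw.2⟩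
    exact ⟨A', hA', hsub.trans ((nbhd_mono hw.1).trans hCX)⟩

theorem exists_decides_extensions (h2 : S.A2) (h3 : S.A3) (h4i : S.A4i) (h4ii : S.A4ii)
    (h5 : S.A5) (mc : S.MetricallyClosed) (X : Set S.R) {a : S.AR} {T : S.R}
    (ha : (S.nbhd a T).Nonempty) :
    ∃ D, S.le D T ∧ (S.nbhd a D).Nonempty ∧ ∀ b, S.Extends a b → (S.nbhd b D).Nonempty →
      S.nbhd b D ⊆ X ∨ S.Rejects X D b :=
  exists_fusion (fun b B => S.nbhd b B ⊆ X ∨ S.Rejects X B b)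
    (fun _ _ _ h => Or.imp (nbhd_mono h).trans (Rejects.mono h))
    (fun _ _ _ _ _ hd => exists_decides h5 X hd) h2 h3 h4i h4ii h5 mc ha

section Rejection

variable {X : Set S.R} {a : S.AR} {D : S.R}
  (hD : ∀ b, S.Extends a b → (S.nbhd b D).Nonempty → S.nbhd b D ⊆ X ∨ S.Rejects X D b)
include hD

theorem exists_rejects_succ (h3 : S.A3) (h5 : S.A5) (h6 : S.A6) {B : S.R} (hBD : S.le B D)
    {b : S.AR} (hab : S.Extends a b) {k : ℕ} (hd : S.IsDepth B b k) (hb : S.Rejects X D b) :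
    ∃ B' ∈ S.nbhd (S.r k B) B,
      ∀ C ∈ S.nbhd b B', ∀ m, S.r m C = b → S.Rejects X D (S.r (m + 1) C) := by
  obtain ⟨m, C₀, hm⟩ := S.r_surj b
  obtain ⟨B', hB', hacc | hnacc⟩ := h6 b B k m hd ⟨C₀, hm⟩ {c | S.nbhd c D ⊆ X}
  · have hB'D : S.le B' D := S.le_trans _ _ _ hB'.1 hBD
    have hsub : S.nbhd b B' ⊆ X := fun C hC =>
      hacc _ ⟨C, hC, rfl⟩ ⟨S.le_trans _ _ _ hC.1 hB'D, m + 1, rfl⟩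
    obtain ⟨C, hC⟩ := (h5 b B k hd).1 B' hB'
    exact ((hb B' hB'D hsub).subset hC).elim
  · refine ⟨B', hB', fun C hC p hp => ?_⟩
    obtain rfl : p = m := (r_agree_of_r_eq h3 (hp.trans hm.symm)).1
    have hCD : S.le C D := S.le_trans _ _ _ hC.1 (S.le_trans _ _ _ hB'.1 hBD)
    obtain ⟨l, hl, hla⟩ := hab.exists_r_eq h3 hp
    exact (hD _ ⟨C, l, p + 1, by omega, hla, rfl⟩ ⟨C, hCD, p + 1, rfl⟩).resolve_left
      (hnacc _ ⟨C, hC, rfl⟩)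

theorem exists_rejects_extensions (h2 : S.A2) (h3 : S.A3) (h4i : S.A4i) (h4ii : S.A4ii)
    (h5 : S.A5) (h6 : S.A6) (mc : S.MetricallyClosed) (ha : (S.nbhd a D).Nonempty)
    (hDa : S.Rejects X D a) :
    ∃ E, S.le E D ∧ (S.nbhd a E).Nonempty ∧
      ∀ C ∈ S.nbhd a E, ∀ l n, l ≤ n → S.r l C = a → S.Rejects X D (S.r n C) := by
  obtain ⟨E, hED, haE, hE⟩ := exists_fusion
    (fun b B => S.Rejects X D b →
      ∀ C ∈ S.nbhd b B, ∀ m, S.r m C = b → S.Rejects X D (S.r (m + 1) C))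
    (fun _ _ _ h hH hb C hC => hH hb C (nbhd_mono h hC))
    (fun B hBD b k hab hd => by
      by_cases hb : S.Rejects X D b
      · obtain ⟨B', hB', h⟩ := exists_rejects_succ hD h3 h5 h6 hBD hab hd hb
        exact ⟨B', hB', fun _ => h⟩
      · exact ⟨B, mem_nbhd_self B k, fun h => absurd h hb⟩)
    h2 h3 h4i h4ii h5 mc ha
  refine ⟨E, hED, haE, fun C hC l n hln hl => ?_⟩
  induction n, hln using Nat.le_induction with
  | base => rwa [hl]
  | succ n hln ih =>
    exact hE _ ⟨C, l, n, hln, hl, rfl⟩ ⟨C, hC.1, n, rfl⟩ ih C ⟨hC.1, n, rfl⟩ n rfl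

end Rejection

theorem not_mem_of_rejects (h3 : S.A3) {X : Set S.R} (hX : S.MetricOpen X) {C D : S.R}
    (hCD : S.le C D) {l : ℕ} (hC : ∀ n, l ≤ n → S.Rejects X D (S.r n C)) : C ∉ X := by
  intro hCX
  obtain ⟨n₀, hn₀⟩ := hX C hCX
  have hsub : S.nbhd (S.r (max n₀ l) C) D ⊆ X := fun B ⟨_, _, hp⟩ =>
    hn₀ B ((r_agree_of_r_eq h3 hp).2 n₀ (le_max_left _ _))
  have hempty := hC (max n₀ l) (le_max_right _ _) D (S.le_refl D) hsub
  exact (Set.eq_empty_iff_forall_notMem.mp hempty) C ⟨hCD, _, rfl⟩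

end RSpace

/-- Metrically open subsets of a topological Ramsey space are Ramsey. -/
theorem metric_open_is_ramsey (S : RSpace) (hS : S.Axioms) (X : Set S.R)
    (hX : S.MetricOpen X) (a : S.AR) (A : S.R) (hne : (S.nbhd a A).Nonempty) :
    ∃ B ∈ S.nbhd a A, (S.nbhd a B ⊆ X ∨ ∀ C ∈ S.nbhd a B, C ∉ X) := by
  obtain ⟨-, h2, h3, h4i, h4ii, h5, h6, mc⟩ := hS
  obtain ⟨D, hDA, haD, hD⟩ := RSpace.exists_decides_extensions h2 h3 h4i h4ii h5 mc X hne
  obtain ⟨C₀, -, l, hl⟩ := hne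
  rcases hD a ⟨C₀, l, l, le_rfl, hl, hl⟩ haD with hacc | hrej
  · obtain ⟨B, hBD, hB⟩ := haD
    exact ⟨B, ⟨S.le_trans _ _ _ hBD hDA, hB⟩, Or.inl ((RSpace.nbhd_mono hBD).trans hacc)⟩
  · obtain ⟨E, hED, ⟨B, hBE, hB⟩, hE⟩ :=
      RSpace.exists_rejects_extensions hD h2 h3 h4i h4ii h5 h6 mc haD hrej
    refine ⟨B, ⟨S.le_trans _ _ _ hBE (S.le_trans _ _ _ hED hDA), hB⟩, Or.inr fun C hC => ?_⟩
    have hCE : C ∈ S.nbhd a E := RSpace.nbhd_mono hBE hC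
    obtain ⟨p, hp⟩ := hCE.2
    exact RSpace.not_mem_of_rejects h3 hX (S.le_trans _ _ _ hCE.1 hED)
      fun n hn => hE C hCE p n hn hp
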